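/- arXiv:2308.15635 — 3 statements merged into one kernel-verified Lean document; each statement's English description precedes it below -/
import Mathlib

section
/- If a list L₁ of Booleans has configuration X ∈ C, a list L₂ of Booleans has configuration X' ∈ C, and X and X' are compatible, then the concatenation L₁ ++ L₂ is cyclically bimodal. (This is the fact, used in the paper's dynamic program over sphere-cut decompositions, that compatible configurations on the two sides of a vertex imply bimodality of that vertex.) -/
/-! For the relation `≠`, the destutter of a concatenation depends only on the destutters of its
two pieces, and the length of a destutter is monotone under sublists. Hence `destutter (L₁ ++ L₂)`
is at most as long as `destutter (X ++ X')`, which compatibility bounds by `3`. A Boolean list with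
three runs has the shape `a…a b…b a…a`; rotating the first run to the back merges it with the
last one, leaving two runs. -/

/-- Edge directions at a vertex: `true` = incoming (`i`), `false` = outgoing (`o`).
The configuration set `C = {[i], [o], [i,o], [o,i], [o,i,o], [i,o,i]}`. -/
def Config : Set (List Bool) :=
  {[true], [false], [true, false], [false, true],
    [false, true, false], [true, false, true]}

/-- A list `L` has configuration `X ∈ C` if the destutter of `L` is a sublist of `X`. -/
def HasConfig (L X : List Bool) : Prop :=
  X ∈ Config ∧ (List.destutter (· ≠ ·) L).Sublist X

/-- Configurations `X, X'` are compatible if the destutter of `X ++ X'` is a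
contiguous substring (infix) of `[o,i,o]` or of `[i,o,i]`. -/
def Compatible (X X' : List Bool) : Prop :=
  (List.destutter (· ≠ ·) (X ++ X')) <:+: [false, true, false] ∨
    (List.destutter (· ≠ ·) (X ++ X')) <:+: [true, false, true]

/-- A list, viewed as a cyclic sequence, is cyclically bimodal if the destutter of
some rotation has length at most `2`. -/
def CyclicallyBimodal (L : List Bool) : Prop :=
  ∃ n : ℕ, (List.destutter (· ≠ ·) (L.rotate n)).length ≤ 2

namespace List

section General

variable {α : Type*} (R : α → α → Prop) [DecidableRel R]

theorem exists_destutter'_eq_cons (a : α) (l : List α) : ∃ s, l.destutter' R a = a :: s := by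
  induction l generalizing a with
  | nil => exact ⟨[], rfl⟩
  | cons b l ih =>
    by_cases hab : R a b
    · exact ⟨_, destutter'_cons_pos _ hab⟩
    · rw [destutter'_cons_neg _ hab]
      exact ih a

theorem destutter'_append (l₁ l₂ : List α) (a : α) :
    (l₁ ++ l₂).destutter' R a =
      (l₁.destutter' R a).dropLast ++
        l₂.destutter' R ((l₁.destutter' R a).getLast (destutter'_ne_nil _ _)) := by
  induction l₁ generalizing a with
  | nil => simp
  | cons b l ih =>
    by_cases hab : R a b
    · simp only [cons_append, destutter'_cons_pos _ hab, ih,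
        dropLast_cons_of_ne_nil (destutter'_ne_nil _ _), getLast_cons (destutter'_ne_nil _ _)]
    · simp only [cons_append, destutter'_cons_neg _ hab, ih]

theorem destutter_append_of_ne_nil {l₁ : List α} (h : l₁ ≠ []) (l₂ : List α) :
    (l₁ ++ l₂).destutter R =
      (l₁.destutter R).dropLast ++
        l₂.destutter' R ((l₁.destutter R).getLast ((destutter_eq_nil R).not.mpr h)) := by
  obtain ⟨a, l, rfl⟩ := exists_cons_of_ne_nil h
  simp only [cons_append, destutter_cons', destutter'_append]

theorem destutter_destutter_append (l₁ l₂ : List α) :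
    (l₁.destutter R ++ l₂).destutter R = (l₁ ++ l₂).destutter R := by
  rcases eq_or_ne l₁ [] with rfl | h
  · simp
  · rw [destutter_append_of_ne_nil R h,
      destutter_append_of_ne_nil R ((destutter_eq_nil R).not.mpr h)]
    simp only [destutter_idem]

end General

section Ne

variable {α : Type*} [DecidableEq α]

theorem destutter_ne_cons_destutter (a : α) (l : List α) :
    (a :: l.destutter (· ≠ ·)).destutter (· ≠ ·) = (a :: l).destutter (· ≠ ·) := by
  cases l with
  | nil => rfl
  | cons b l =>
    obtain ⟨s, hs⟩ := exists_destutter'_eq_cons (· ≠ ·) b l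
    have hchain : (b :: s).IsChain (· ≠ ·) := hs ▸ isChain_destutter' _ l b
    rw [destutter_cons' (R := (· ≠ ·)) (a := b), hs, destutter_cons_cons, destutter_cons_cons]
    by_cases hab : a = b
    · subst hab
      simp [destutter'_of_isChain_cons _ _ hchain, hs]
    · simp [hab, destutter'_of_isChain_cons _ _ hchain, hs]

theorem destutter_ne_append_destutter (l₁ l₂ : List α) :
    (l₁ ++ l₂.destutter (· ≠ ·)).destutter (· ≠ ·) = (l₁ ++ l₂).destutter (· ≠ ·) := by
  induction l₁ with
  | nil => exact destutter_idem _ _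
  | cons a l ih =>
    rw [cons_append, ← destutter_ne_cons_destutter, ih, destutter_ne_cons_destutter, cons_append]

theorem Sublist.length_destutter_ne_le {l₁ l₂ : List α} (h : l₁ <+ l₂) :
    (l₁.destutter (· ≠ ·)).length ≤ (l₂.destutter (· ≠ ·)).length :=
  IsChain.length_le_length_destutter_ne ((destutter_sublist _ _).trans h) (isChain_destutter _ _)

theorem length_destutter_ne_append_le {l₁ l₂ m₁ m₂ : List α}
    (h₁ : l₁.destutter (· ≠ ·) <+ m₁) (h₂ : l₂.destutter (· ≠ ·) <+ m₂) :
    ((l₁ ++ l₂).destutter (· ≠ ·)).length ≤ ((m₁ ++ m₂).destutter (· ≠ ·)).length := by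
  rw [← destutter_ne_append_destutter, ← destutter_destutter_append]
  exact (h₁.append h₂).length_destutter_ne_le

theorem destutter_ne_replicate_succ (n : ℕ) (a : α) :
    (replicate (n + 1) a).destutter (· ≠ ·) = [a] := by
  induction n with
  | zero => rfl
  | succ n ih =>
    rw [replicate_succ, ← destutter_ne_cons_destutter, ih]
    simp

theorem exists_cons_eq_replicate_append (a : α) (l : List α) :
    ∃ n M, a :: l = replicate (n + 1) a ++ M ∧
      (a :: l).destutter (· ≠ ·) = a :: M.destutter (· ≠ ·) := by
  induction l with
  | nil => exact ⟨0, [], rfl, rfl⟩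
  | cons b l ih =>
    by_cases hab : a = b
    · subst hab
      obtain ⟨n, M, hl, hd⟩ := ih
      refine ⟨n + 1, M, by rw [hl]; rfl, ?_⟩
      rw [destutter_cons_cons, if_neg (not_not.mpr rfl), ← destutter_cons', hd]
    · exact ⟨0, b :: l, rfl, by rw [destutter_cons_cons, if_pos hab, ← destutter_cons']⟩

end Ne

end List

open List

theorem Compatible.length_destutter_le_three {X X' : List Bool} (h : Compatible X X') :
    ((X ++ X').destutter (· ≠ ·)).length ≤ 3 := by
  rcases h with h | h <;> exact h.length_le

theorem cyclicallyBimodal_of_length_destutter_le_three {L : List Bool}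
    (h : (L.destutter (· ≠ ·)).length ≤ 3) : CyclicallyBimodal L := by
  by_cases h2 : (L.destutter (· ≠ ·)).length ≤ 2
  · exact ⟨0, by simpa using h2⟩
  obtain ⟨a, l, rfl⟩ := exists_cons_of_ne_nil (fun h0 : L = [] => by simp [h0] at h2)
  obtain ⟨n, M, hl, hd⟩ := exists_cons_eq_replicate_append a l
  obtain ⟨b, c, hM⟩ : ∃ b c, M.destutter (· ≠ ·) = [b, c] :=
    length_eq_two.mp (by simp only [hd, length_cons] at h h2; omega)
  have hchain : [a, b, c].IsChain (· ≠ ·) := hM ▸ hd ▸ isChain_destutter _ _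
  refine ⟨(replicate (n + 1) a).length, ?_⟩
  rw [hl, rotate_append_length_eq, ← destutter_ne_append_destutter, destutter_ne_replicate_succ,
    ← destutter_destutter_append, hM]
  revert hchain
  cases a <;> cases b <;> cases c <;> decide

/-- If `L₁` has configuration `X`, `L₂` has configuration `X'`, and `X, X'` are
compatible, then `L₁ ++ L₂` is cyclically bimodal. -/
theorem compatible_configs_imply_bimodal (L₁ L₂ X X' : List Bool)
    (h₁ : HasConfig L₁ X) (h₂ : HasConfig L₂ X') (hc : Compatible X X') :
    CyclicallyBimodal (L₁ ++ L₂) :=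
  cyclicallyBimodal_of_length_destutter_le_three
    ((length_destutter_ne_append_le h₁.2 h₂.2).trans hc.length_destutter_le_three)
end

section
/- (Structural core of the EPTAS via Baker layering.) Let G be an embedded digraph with nonnegative rational edge weights w. Let ≈ be the symmetric relation on V with u ≈ u' if and only if some e ∈ E has {tail e, head e} = {u, u'}; assume the simple graph (V, ≈) is connected, fix a root r ∈ V, and for u ∈ V let d(u) be the graph distance from r to u in (V, ≈). For an integer t ≥ 1 and 0 ≤ i < t, let E^(i) = { e ∈ E : {d(tail e), d(head e)} = {j, j+1} for some j with j ≡ i (mod t) }. Then there exists an index i ∈ {0, …, t−1} such that MBW(G[E ∖ E^(i)], w) ≥ (1 − 1/t) · MBW(G, w). -/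
open scoped Classical

/-- An embedded digraph: a finite edge set `edges` within an ambient type `E`,
maps `tail, head : E → V` with `tail e ≠ head e` for edges, and for each vertex a
cyclic ordering `rot v` (a list, considered up to rotation) containing exactly once
each dart at `v`.  A dart is a pair `(e, b)` where `b = true` marks the in-dart
(with `head e = v`) and `b = false` the out-dart (with `tail e = v`). -/
structure EmbDigraph (V : Type*) (E : Type*) where
  edges : Finset E
  tail : E → V
  head : E → V
  tail_ne_head : ∀ e ∈ edges, tail e ≠ head e
  rot : V → List (E × Bool)
  rot_nodup : ∀ u : V, (rot u).Nodup
  mem_rot : ∀ (u : V) (d : E × Bool),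
    d ∈ rot u ↔ d.1 ∈ edges ∧ ((d.2 = true ∧ head d.1 = u) ∨ (d.2 = false ∧ tail d.1 = u))

namespace EmbDigraph

variable {V : Type*} {E : Type*}

/-- A list of booleans consisting of a block of `true`s followed by a block of
`false`s: all in-darts precede all out-darts. -/
def IsTwoBlock (l : List Bool) : Prop :=
  ∃ a b : ℕ, l = List.replicate a true ++ List.replicate b false

/-- Vertex `u` is bimodal in the spanning subgraph `G[F]`: some rotation of its
dart list, restricted to the darts of edges in `F`, has all in-darts preceding all
out-darts. -/
def VertexBimodalIn (G : EmbDigraph V E) (F : Finset E) (u : V) : Prop :=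
  ∃ n : ℕ,
    IsTwoBlock ((((G.rot u).rotate n).filter fun d => decide (d.1 ∈ F)).map Prod.snd)

/-- The spanning subgraph `G[F]` is bimodal: every vertex is bimodal in it. -/
def BimodalIn (G : EmbDigraph V E) (F : Finset E) : Prop :=
  ∀ u : V, G.VertexBimodalIn F u

/-- A vertex is good if it is bimodal in `G` itself; otherwise it is bad. -/
def Good (G : EmbDigraph V E) (u : V) : Prop :=
  G.VertexBimodalIn G.edges u

/-- `m` is the maximum weight `MBW(G, w)` of a bimodal spanning subgraph of `G`. -/
def IsMBW (G : EmbDigraph V E) (w : E → ℚ) (m : ℚ) : Prop :=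
  IsGreatest {x : ℚ | ∃ F : Finset E, F ⊆ G.edges ∧ G.BimodalIn F ∧ ∑ e ∈ F, w e = x} m

end EmbDigraph

namespace EmbDigraph

variable {V : Type*} {E : Type*}

/-- The underlying simple graph `(V, ≈)`: `u ≈ u'` iff some edge has endpoint set
`{u, u'}`. -/
def underlying (G : EmbDigraph V E) : SimpleGraph V where
  Adj u u' := u ≠ u' ∧
    ∃ e ∈ G.edges, (G.tail e = u ∧ G.head e = u') ∨ (G.tail e = u' ∧ G.head e = u)
  symm := ⟨by
    rintro u u' ⟨h, e, he, h'⟩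
    exact ⟨h.symm, e, he, h'.symm⟩⟩
  loopless := ⟨fun u h => h.1 rfl⟩

/-- `m` is the maximum weight of a bimodal spanning subgraph of `G` using only
edges from `A`, i.e. `MBW(G[A], w)`. -/
def IsMBWOn (G : EmbDigraph V E) (w : E → ℚ) (A : Finset E) (m : ℚ) : Prop :=
  IsGreatest
    {x : ℚ | ∃ F : Finset E, F ⊆ A ∧ F ⊆ G.edges ∧ G.BimodalIn F ∧ ∑ e ∈ F, w e = x} m

end EmbDigraph

/-!
An edge joins consecutive BFS layers `j, j + 1` for at most one residue `j mod t`, so the sets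
`E^(0), …, E^(t-1)` are pairwise disjoint. Hence some `E^(i)` carries at most a `1/t` fraction of
the weight of an optimal bimodal subgraph `F`, and `F ∖ E^(i)` is still bimodal, since deleting
edges only deletes entries of the dart lists and a sublist of `in…in out…out` has the same shape.
-/

namespace EmbDigraph

variable {V E : Type*}

theorem IsTwoBlock.sublist {l l' : List Bool} (hl : IsTwoBlock l) (h : l'.Sublist l) :
    IsTwoBlock l' := by
  obtain ⟨a, b, rfl⟩ := hl
  obtain ⟨s, u, rfl, hs, hu⟩ := List.sublist_append_iff.mp h
  refine ⟨s.length, u.length, ?_⟩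
  rw [← List.eq_replicate_length.mpr fun x hx => List.eq_of_mem_replicate (hs.subset hx),
    ← List.eq_replicate_length.mpr fun x hx => List.eq_of_mem_replicate (hu.subset hx)]

theorem BimodalIn.mono {G : EmbDigraph V E} {F F' : Finset E} (h : G.BimodalIn F)
    (hsub : F' ⊆ F) : G.BimodalIn F' := by
  intro u
  obtain ⟨n, hn⟩ := h u
  refine ⟨n, hn.sublist ((List.monotone_filter_right _ fun d hd => ?_).map Prod.snd)⟩
  simp only [decide_eq_true_eq] at hd ⊢
  exact hsub hd

/-- With `d` the distance from the root, `G.edges.filter (G.CutAt d t i)` is the paper's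
`E^(i)`. -/
def CutAt (G : EmbDigraph V E) (d : V → ℕ) (t i : ℕ) (e : E) : Prop :=
  ∃ j : ℕ, j % t = i ∧
    ((d (G.tail e) = j ∧ d (G.head e) = j + 1) ∨ (d (G.tail e) = j + 1 ∧ d (G.head e) = j))

theorem CutAt.unique {G : EmbDigraph V E} {d : V → ℕ} {t i i' : ℕ} {e : E}
    (h : G.CutAt d t i e) (h' : G.CutAt d t i' e) : i = i' := by
  obtain ⟨j, rfl, hj⟩ := h
  obtain ⟨j', rfl, hj'⟩ := h'
  obtain rfl : j = j' := by omega
  rfl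

end EmbDigraph

theorem Finset.exists_sum_filter_not_ge {ι 𝕜 : Type*} [Field 𝕜] [LinearOrder 𝕜]
    [IsStrictOrderedRing 𝕜] {s : Finset ι} {w : ι → 𝕜} (hw : ∀ x ∈ s, 0 ≤ w x)
    {P : ℕ → ι → Prop} [∀ i, DecidablePred (P i)] (hP : ∀ x i i', P i x → P i' x → i = i')
    {t : ℕ} (ht : 0 < t) :
    ∃ i < t, (1 - 1 / (t : 𝕜)) * ∑ x ∈ s, w x ≤ ∑ x ∈ s.filter (fun x => ¬ P i x), w x := by
  have hdisj : (↑(range t) : Set ℕ).PairwiseDisjoint (fun i => s.filter (P i)) :=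
    fun i _ i' _ hne => disjoint_left.mpr fun x hx hx' =>
      hne (hP x i i' (mem_filter.mp hx).2 (mem_filter.mp hx').2)
  have htotal : ∑ i ∈ range t, ∑ x ∈ s.filter (P i), w x ≤ ∑ x ∈ s, w x := by
    rw [← sum_biUnion hdisj]
    exact sum_le_sum_of_subset_of_nonneg (biUnion_subset.mpr fun i _ => filter_subset _ _)
      fun x hx _ => hw x hx
  have ht' : (0 : 𝕜) < t := by exact_mod_cast ht
  obtain ⟨i, hi, hsmall⟩ : ∃ i ∈ range t, ∑ x ∈ s.filter (P i), w x ≤ (∑ x ∈ s, w x) / t := by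
    refine exists_le_of_sum_le ⟨0, mem_range.mpr ht⟩ ?_
    rwa [sum_const, card_range, nsmul_eq_mul, mul_div_cancel₀ _ ht'.ne']
  refine ⟨i, mem_range.mp hi, ?_⟩
  have hsplit := sum_filter_add_sum_filter_not s (P i) w
  have hring : (1 - 1 / (t : 𝕜)) * ∑ x ∈ s, w x = ∑ x ∈ s, w x - (∑ x ∈ s, w x) / t := by ring
  linarith

open EmbDigraph

theorem baker_layering_general {V E : Type*} (G : EmbDigraph V E) (w : E → ℚ)
    (hw : ∀ e, 0 ≤ w e) (r : V)
    (t : ℕ) (ht : 1 ≤ t) :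
    ∃ i < t, ∀ m mi : ℚ, G.IsMBW w m →
      G.IsMBWOn w
        (G.edges \ (G.edges.filter fun e => ∃ j : ℕ, j % t = i ∧
          ((G.underlying.dist r (G.tail e) = j ∧ G.underlying.dist r (G.head e) = j + 1) ∨
            (G.underlying.dist r (G.tail e) = j + 1 ∧ G.underlying.dist r (G.head e) = j)))) mi →
      (1 - 1 / (t : ℚ)) * m ≤ mi := by
  by_cases hex : ∃ m, G.IsMBW w m
  swap
  · exact ⟨0, ht, fun m _ hm _ => (hex ⟨m, hm⟩).elim⟩
  obtain ⟨m, hm⟩ := hex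
  obtain ⟨F, hFE, hFbim, rfl⟩ := hm.1
  obtain ⟨i, hi, hle⟩ := F.exists_sum_filter_not_ge (fun e _ => hw e)
    (P := G.CutAt (G.underlying.dist r) t) (fun e _ _ => CutAt.unique) ht
  refine ⟨i, hi, fun m' mi hm' hmi => ?_⟩
  rw [hm'.unique hm]
  have hFi : F.filter (fun e => ¬ G.CutAt (G.underlying.dist r) t i e) ⊆
      G.edges \ G.edges.filter (G.CutAt (G.underlying.dist r) t i) := fun e he => by
    simp only [Finset.mem_filter, Finset.mem_sdiff] at he ⊢
    exact ⟨hFE he.1, fun h => he.2 h.2⟩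
  exact hle.trans (hmi.2 ⟨_, hFi, (Finset.filter_subset _ _).trans hFE,
    hFbim.mono (Finset.filter_subset _ _), rfl⟩)

/-- Structural core of the EPTAS via Baker layering: with `d(u)` the BFS distance
from a root `r` in the connected underlying graph, and
`E^(i) = {e : {d(tail e), d(head e)} = {j, j+1} for some j ≡ i (mod t)}`, there is
an index `i < t` with `MBW(G[E ∖ E^(i)], w) ≥ (1 - 1/t) · MBW(G, w)`. -/
theorem baker_layering {V E : Type*} (G : EmbDigraph V E) (w : E → ℚ)
    (hw : ∀ e, 0 ≤ w e) (hconn : G.underlying.Connected) (r : V)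
    (t : ℕ) (ht : 1 ≤ t) :
    ∃ i < t, ∀ m mi : ℚ, G.IsMBW w m →
      G.IsMBWOn w
        (G.edges \ (G.edges.filter fun e => ∃ j : ℕ, j % t = i ∧
          ((G.underlying.dist r (G.tail e) = j ∧ G.underlying.dist r (G.head e) = j + 1) ∨
            (G.underlying.dist r (G.tail e) = j + 1 ∧ G.underlying.dist r (G.head e) = j)))) mi →
      (1 - 1 / (t : ℚ)) * m ≤ mi :=
  baker_layering_general G w hw r t ht
end

section
/- (Soundness of Reduction Rule 5 for Cut-MWBS.) Let (G, w, ℰ) be an instance of Cut-MWBS in which the good vertices are pairwise non-adjacent and every good vertex is incident to exactly one dart. Let v be a bad vertex, S a good edge-section of v, and let ℰ_in, ℰ_out ∈ ℰ be parts with ℰ_in, ℰ_out ⊆ S such that: every edge of ℰ_in is directed into v, every edge of ℰ_out is directed out of v, the darts at v of ℰ_in ∪ ℰ_out form a consecutive arc within S, and at least one of ℰ_in, ℰ_out does not itself form a consecutive arc within S. Assume moreover that there exists a feasible F for (G, w, ℰ) of maximum weight containing at most one of the parts ℰ_in, ℰ_out. Let (G', w', ℰ') be obtained by replacing, in the cyclic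 ordering at v, the arc of darts of ℰ_in ∪ ℰ_out by four new edges e₁, e₂, e₃, e₄ in this consecutive order, where e₁ and e₃ are directed into v, e₂ and e₄ are directed out of v, each e_k joins v to a fresh pendant vertex, w'(e₁) = w'(e₄) = 0, w'(e₂) = ∑_{f ∈ ℰ_out} w(f), w'(e₃) = ∑_{f ∈ ℰ_in} w(f), w' = w on all other edges, and the parts ℰ_in and ℰ_out of ℰ are replaced by the parts {e₁, e₃} and {e₂, e₄} respectively. Then Cut-MBW(G', w', ℰ') = Cut-MBW(G, w, ℰ). -/
open scoped Classical

namespace EmbDigraph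

variable {V : Type*} {E : Type*}

/-- The darts at `v` of the edges of `S` form a consecutive arc in the cyclic
ordering at `v`. -/
def ArcAt (G : EmbDigraph V E) (v : V) (S : Set E) : Prop :=
  ∃ n k : ℕ, ∀ d ∈ G.rot v, (d ∈ ((G.rot v).rotate n).take k ↔ d.1 ∈ S)

/-- `T ⊆ S` and the darts at `v` of the edges of `T` form a consecutive arc within
the arc formed by the darts of `S` in the cyclic ordering at `v`. -/
def ArcWithin (G : EmbDigraph V E) (v : V) (S T : Set E) : Prop :=
  T ⊆ S ∧ ∃ n k a b : ℕ, a ≤ b ∧ b ≤ k ∧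
    (∀ d ∈ G.rot v, (d ∈ ((G.rot v).rotate n).take k ↔ d.1 ∈ S)) ∧
    (∀ d ∈ G.rot v, (d ∈ (((G.rot v).rotate n).take b).drop a ↔ d.1 ∈ T))

/-- `S` is a set of edges incident to `v` whose darts at `v` form a consecutive arc
in the cyclic ordering at `v` and such that the endpoint other than `v` of every
edge of `S` is good. -/
def SectionProps (G : EmbDigraph V E) (v : V) (S : Set E) : Prop :=
  S ⊆ ↑G.edges ∧ (∀ e ∈ S, G.tail e = v ∨ G.head e = v) ∧
    (∀ e ∈ S, G.Good (if G.tail e = v then G.head e else G.tail e)) ∧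
    G.ArcAt v S

/-- A good edge-section of `v`: a maximal set of edges incident to `v` whose darts
at `v` form a consecutive arc and whose other endpoints are all good. -/
def GoodEdgeSection (G : EmbDigraph V E) (v : V) (S : Set E) : Prop :=
  G.SectionProps v S ∧ ∀ S' : Set E, S ⊆ S' → G.SectionProps v S' → S' = S

end EmbDigraph

namespace EmbDigraph

variable {V : Type*} {E : Type*}

/-- `𝓔` is a partition of the edge set of `G` into nonempty parts. -/
def IsEdgePartition (G : EmbDigraph V E) (𝓔 : Finset (Finset E)) : Prop :=
  (∀ P ∈ 𝓔, P.Nonempty ∧ P ⊆ G.edges) ∧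
    (∀ P ∈ 𝓔, ∀ Q ∈ 𝓔, P ≠ Q → Disjoint P Q) ∧
    (∀ e ∈ G.edges, ∃ P ∈ 𝓔, e ∈ P)

/-- `F` is feasible for the Cut-MWBS instance `(G, w, 𝓔)`: `F` is a union of parts
of `𝓔` and `G[F]` is bimodal. -/
def CutFeasible (G : EmbDigraph V E) (𝓔 : Finset (Finset E)) (F : Finset E) : Prop :=
  F ⊆ G.edges ∧ (∀ P ∈ 𝓔, P ⊆ F ∨ Disjoint P F) ∧ G.BimodalIn F

/-- `m` is the maximum weight `Cut-MBW(G, w, 𝓔)` over feasible sets of the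
Cut-MWBS instance `(G, w, 𝓔)`. -/
def IsCutMBW (G : EmbDigraph V E) (w : E → ℚ) (𝓔 : Finset (Finset E)) (m : ℚ) : Prop :=
  IsGreatest {x : ℚ | ∃ F : Finset E, G.CutFeasible 𝓔 F ∧ ∑ e ∈ F, w e = x} m

end EmbDigraph

open EmbDigraph

/-!
A feasible set is determined by its edges outside `ℰ_in ∪ ℰ_out` together with the choice of
which of the two parts it contains; in the reduced instance the same choice selects `{e₁, e₃}`,
`{e₂, e₄}` or neither, at the same weight. Away from `v` nothing changes, since the edges of
`ℰ_in ∪ ℰ_out` end in good vertices, which are pendant. At `v` these edges form an arc, so taking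
`ℰ_in` alone puts a nonempty block of in-darts there, exactly as `{e₁, e₃}` does, and whether a
cyclic word is two-block does not depend on the length of a nonempty block of equal letters.
Hence feasible sets containing at most one of the two parts correspond to all feasible sets of
the reduced instance (taking both gadget parts gives in, out, in, out at `v`, which is never
bimodal), and an optimum of the original instance is of this kind.
-/

theorem List.IsRotated.filter {α : Type*} {l l' : List α} (h : l ~r l') (p : α → Bool) :
    l.filter p ~r l'.filter p := by
  obtain ⟨n, rfl⟩ := h
  rw [List.rotate_eq_drop_append_take_mod, List.filter_append]
  conv_lhs => rw [← List.take_append_drop (n % l.length) l, List.filter_append]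
  exact List.isRotated_append

theorem List.exists_rotate_filter_eq_rotate_one {α : Type*} (l : List α) (p : α → Bool) :
    ∃ k, (l.rotate k).filter p = (l.filter p).rotate 1 := by
  cases hfind : l.find? p with
  | none =>
    have hnil : l.filter p = [] :=
      List.filter_eq_nil_iff.mpr fun a ha => by simpa using List.find?_eq_none.mp hfind a ha
    exact ⟨0, by rw [List.rotate_zero, hnil, List.rotate_nil]⟩
  | some a =>
    -- rotate `l` just past its first element satisfying `p`
    obtain ⟨ha, X, Y, rfl, hX⟩ := List.find?_eq_some_iff_append.mp hfind
    have hXf : X.filter p = [] := List.filter_eq_nil_iff.mpr (by simpa using hX)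
    refine ⟨(X ++ [a]).length, ?_⟩
    rw [show X ++ a :: Y = (X ++ [a]) ++ Y by simp, List.rotate_append_length_eq]
    simp [List.filter_append, hXf, ha]

theorem List.exists_rotate_filter_eq_rotate {α : Type*} (l : List α) (p : α → Bool) (m : ℕ) :
    ∃ k, (l.rotate k).filter p = (l.filter p).rotate m := by
  induction m with
  | zero => exact ⟨0, by simp⟩
  | succ m ih =>
    obtain ⟨k, hk⟩ := ih
    obtain ⟨j, hj⟩ := List.exists_rotate_filter_eq_rotate_one (l.rotate k) p
    exact ⟨k + j, by rw [← List.rotate_rotate, hj, hk, List.rotate_rotate]⟩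

namespace EmbDigraph

variable {V E : Type*}

theorem isTwoBlock_iff_pairwise {l : List Bool} : IsTwoBlock l ↔ l.Pairwise (· ≥ ·) := by
  constructor
  · rintro ⟨a, b, rfl⟩
    simp [List.pairwise_append]
  · induction l with
    | nil => exact fun _ => ⟨0, 0, rfl⟩
    | cons x l ih =>
      intro h
      obtain ⟨hx, hl⟩ := List.pairwise_cons.mp h
      obtain ⟨a, b, rfl⟩ := ih hl
      cases x
      · obtain rfl : a = 0 := by
          by_contra ha
          exact absurd (hx true (by simp [List.mem_replicate, ha])) (by decide)
        exact ⟨0, b + 1, rfl⟩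
      · exact ⟨a + 1, b, rfl⟩

theorem isTwoBlock_of_length_le_one : ∀ {l : List Bool}, l.length ≤ 1 → IsTwoBlock l
  | [], _ => ⟨0, 0, rfl⟩
  | [true], _ => ⟨1, 0, rfl⟩
  | [false], _ => ⟨0, 1, rfl⟩

def IsCyclicTwoBlock (l : List Bool) : Prop :=
  ∃ n, IsTwoBlock (l.rotate n)

theorem _root_.List.IsRotated.isCyclicTwoBlock_iff {l l' : List Bool} (h : l ~r l') :
    IsCyclicTwoBlock l ↔ IsCyclicTwoBlock l' := by
  suffices ∀ {l l' : List Bool}, l ~r l' → IsCyclicTwoBlock l' → IsCyclicTwoBlock l from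
    ⟨this h.symm, this h⟩
  rintro l l' ⟨k, rfl⟩ ⟨n, hn⟩
  exact ⟨k + n, by rwa [← List.rotate_rotate]⟩

theorem isCyclicTwoBlock_iff_exists_append {l : List Bool} :
    IsCyclicTwoBlock l ↔ ∃ X Y, l = X ++ Y ∧ (Y ++ X).Pairwise (· ≥ ·) := by
  simp only [IsCyclicTwoBlock, isTwoBlock_iff_pairwise]
  constructor
  · rintro ⟨n, hn⟩
    rw [List.rotate_eq_drop_append_take_mod] at hn
    exact ⟨_, _, (List.take_append_drop _ l).symm, hn⟩
  · rintro ⟨X, Y, rfl, h⟩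
    exact ⟨X.length, by rwa [List.rotate_append_length_eq]⟩

theorem isCyclicTwoBlock_true_cons_iff {L : List Bool} :
    IsCyclicTwoBlock (true :: L) ↔
      ∃ M N, L = M ++ N ∧ M.Pairwise (· ≥ ·) ∧ ∀ y ∈ N, y = true := by
  rw [isCyclicTwoBlock_iff_exists_append]
  constructor
  · rintro ⟨X, Y, hXY, h⟩
    rcases X with _ | ⟨x, X⟩
    · subst hXY
      rw [List.append_nil] at h
      exact ⟨L, [], by simp, (List.pairwise_cons.mp h).2, by simp⟩
    · obtain ⟨rfl, rfl⟩ := List.cons_eq_cons.mp hXY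
      obtain ⟨-, hX, hYX⟩ := List.pairwise_append.mp h
      exact ⟨X, Y, rfl, (List.pairwise_cons.mp hX).2,
        fun y hy => le_antisymm (Bool.le_true y) (hYX y hy true (by simp))⟩
  · rintro ⟨M, N, rfl, hM, hN⟩
    refine ⟨true :: M, N, rfl, List.pairwise_append.mpr ⟨?_, ?_, ?_⟩⟩
    · rw [List.eq_replicate_iff.mpr ⟨rfl, hN⟩]
      exact List.pairwise_replicate.mpr (Or.inr le_rfl)
    · exact List.pairwise_cons.mpr ⟨fun y _ => Bool.le_true y, hM⟩
    · intro y hy z _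
      rw [hN y hy]
      exact Bool.le_true z

theorem isCyclicTwoBlock_true_cons_true_cons_iff {L : List Bool} :
    IsCyclicTwoBlock (true :: true :: L) ↔ IsCyclicTwoBlock (true :: L) := by
  rw [isCyclicTwoBlock_true_cons_iff, isCyclicTwoBlock_true_cons_iff]
  constructor
  · rintro ⟨_ | ⟨x, M⟩, N, hL, hM, hN⟩
    · subst hL
      exact ⟨[], L, rfl, List.Pairwise.nil, fun y hy => hN y (by simp [hy])⟩
    · obtain ⟨rfl, rfl⟩ := List.cons_eq_cons.mp hL
      exact ⟨M, N, rfl, (List.pairwise_cons.mp hM).2, hN⟩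
  · rintro ⟨M, N, rfl, hM, hN⟩
    exact ⟨true :: M, N, rfl, List.pairwise_cons.mpr ⟨fun y _ => Bool.le_true y, hM⟩, hN⟩

theorem isCyclicTwoBlock_map_not_iff {l : List Bool} :
    IsCyclicTwoBlock (l.map not) ↔ IsCyclicTwoBlock l := by
  suffices ∀ l : List Bool, IsCyclicTwoBlock l → IsCyclicTwoBlock (l.map not) from
    ⟨fun h => by simpa [Function.comp_def] using this _ h, this l⟩
  rintro l ⟨n, a, b, hn⟩
  refine (List.IsRotated.isCyclicTwoBlock_iff ((List.IsRotated.forall l n).map not)).mp ?_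
  rw [hn, List.map_append, List.map_replicate, List.map_replicate]
  exact ⟨a, b, a, by
    simpa using List.rotate_append_length_eq (List.replicate a false) (List.replicate b true)⟩

theorem isCyclicTwoBlock_replicate_append_iff (x : Bool) {a b : ℕ} (ha : 0 < a) (hb : 0 < b)
    (L : List Bool) :
    IsCyclicTwoBlock (List.replicate a x ++ L) ↔ IsCyclicTwoBlock (List.replicate b x ++ L) := by
  suffices h : ∀ (L : List Bool) (n : ℕ),
      IsCyclicTwoBlock (List.replicate (n + 1) true ++ L) ↔ IsCyclicTwoBlock (true :: L) by
    obtain ⟨a, rfl⟩ := Nat.exists_eq_add_of_lt ha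
    obtain ⟨b, rfl⟩ := Nat.exists_eq_add_of_lt hb
    cases x
    · rw [← isCyclicTwoBlock_map_not_iff, ← isCyclicTwoBlock_map_not_iff (l := _ ++ L)]
      simpa using (h (L.map not) a).trans (h (L.map not) b).symm
    · simpa using (h L a).trans (h L b).symm
  intro L n
  induction n with
  | zero => rfl
  | succ n ih => exact isCyclicTwoBlock_true_cons_true_cons_iff.trans ih

theorem not_isCyclicTwoBlock_alternating (L : List Bool) :
    ¬ IsCyclicTwoBlock ([true, false, true, false] ++ L) := by
  rw [List.cons_append, isCyclicTwoBlock_true_cons_iff]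
  rintro ⟨M, N, hMN, hM, hN⟩
  rcases M with _ | ⟨x, _ | ⟨y, M⟩⟩ <;>
    simp only [List.cons_append, List.nil_append, List.cons.injEq] at hMN
  · exact absurd (hN false (by simp [← hMN])) (by decide)
  · exact absurd (hN false (by simp [← hMN.2])) (by decide)
  · obtain ⟨rfl, rfl, -⟩ := hMN
    exact absurd ((List.pairwise_cons.mp hM).1 true (by simp)) (by decide)

noncomputable def dartPattern (F : Finset E) (l : List (E × Bool)) : List Bool :=
  (l.filter fun d => decide (d.1 ∈ F)).map Prod.snd

theorem _root_.List.IsRotated.dartPattern {l l' : List (E × Bool)} (h : l ~r l')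
    (F : Finset E) : dartPattern F l ~r dartPattern F l' :=
  (h.filter _).map _

theorem dartPattern_append (F : Finset E) (l l' : List (E × Bool)) :
    dartPattern F (l ++ l') = dartPattern F l ++ dartPattern F l' := by
  simp [dartPattern, List.filter_append]

theorem dartPattern_map {E' : Type*} (g : E → E') {F : Finset E} {F' : Finset E'}
    {l : List (E × Bool)} (h : ∀ d ∈ l, g d.1 ∈ F' ↔ d.1 ∈ F) :
    dartPattern F' (l.map fun d => (g d.1, d.2)) = dartPattern F l := by
  simp only [dartPattern, List.filter_map, List.map_map, Function.comp_def]
  rw [List.filter_congr fun d hd => decide_eq_decide.mpr (h d hd)]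

theorem dartPattern_eq_nil {F : Finset E} {l : List (E × Bool)} (h : ∀ d ∈ l, d.1 ∉ F) :
    dartPattern F l = [] := by
  simpa [dartPattern] using h

theorem exists_dartPattern_eq_replicate {F : Finset E} {l : List (E × Bool)} {x : Bool}
    (h : ∀ d ∈ l, d.1 ∈ F → d.2 = x) (hne : ∃ d ∈ l, d.1 ∈ F) :
    ∃ c, 0 < c ∧ dartPattern F l = List.replicate c x := by
  obtain ⟨d, hd, hdF⟩ := hne
  refine ⟨_, List.length_pos_of_mem (a := d.2) ?_, List.eq_replicate_iff.mpr ⟨rfl, ?_⟩⟩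
  · exact List.mem_map.mpr ⟨d, List.mem_filter.mpr ⟨hd, decide_eq_true hdF⟩, rfl⟩
  · simp only [dartPattern, List.mem_map, List.mem_filter, decide_eq_true_eq]
    rintro _ ⟨d, ⟨hd, hdF⟩, rfl⟩
    exact h d hd hdF

theorem vertexBimodalIn_iff {G : EmbDigraph V E} {F : Finset E} {u : V} {l : List (E × Bool)}
    (h : G.rot u ~r l) : G.VertexBimodalIn F u ↔ IsCyclicTwoBlock (dartPattern F l) := by
  rw [← (h.dartPattern F).isCyclicTwoBlock_iff]
  constructor
  · rintro ⟨n, hn⟩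
    exact ((List.IsRotated.forall _ n).dartPattern F).isCyclicTwoBlock_iff.mp ⟨0, by simpa⟩
  · rintro ⟨m, hm⟩
    obtain ⟨n, hn⟩ := List.exists_rotate_filter_eq_rotate (G.rot u) (fun d => decide (d.1 ∈ F)) m
    refine ⟨n, ?_⟩
    rwa [hn, List.map_rotate]

theorem vertexBimodalIn_of_length_le_one {G : EmbDigraph V E} {u : V}
    (h : (G.rot u).length ≤ 1) (F : Finset E) : G.VertexBimodalIn F u :=
  ⟨0, isTwoBlock_of_length_le_one (by
    simpa [dartPattern] using (List.length_filter_le _ _).trans h)⟩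

theorem dir_eq_true_of_head_eq {G : EmbDigraph V E} {v : V} {d : E × Bool}
    (hd : d ∈ G.rot v) (h : G.head d.1 = v) : d.2 = true := by
  obtain ⟨he, ⟨hin, -⟩ | ⟨-, ht⟩⟩ := (G.mem_rot v d).mp hd
  · exact hin
  · exact absurd (ht.trans h.symm) (G.tail_ne_head _ he)

theorem dir_eq_false_of_tail_eq {G : EmbDigraph V E} {v : V} {d : E × Bool}
    (hd : d ∈ G.rot v) (h : G.tail d.1 = v) : d.2 = false := by
  obtain ⟨he, ⟨-, hh⟩ | ⟨hout, -⟩⟩ := (G.mem_rot v d).mp hd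
  · exact absurd (h.trans hh.symm) (G.tail_ne_head _ he)
  · exact hout

theorem SectionProps.length_rot_le_one {G : EmbDigraph V E} {v : V} {S : Set E}
    (hS : G.SectionProps v S) (hdeg : ∀ u : V, G.Good u → (G.rot u).length = 1) {u : V}
    (huv : u ≠ v) {d : E × Bool} (hd : d ∈ G.rot u) (hdS : d.1 ∈ S) : (G.rot u).length ≤ 1 := by
  obtain ⟨-, hinc, hgood, -⟩ := hS
  have hu : (if G.tail d.1 = v then G.head d.1 else G.tail d.1) = u := by
    obtain ⟨-, ⟨-, hh⟩ | ⟨-, ht⟩⟩ := (G.mem_rot u d).mp hd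
    · split_ifs with htv
      · exact hh
      · exact absurd (hh ▸ (hinc d.1 hdS).resolve_left htv) huv
    · rw [if_neg (ht ▸ huv)]
      exact ht
  exact (hdeg u (hu ▸ hgood d.1 hdS)).le

noncomputable def liftEdges (P Q F₀ : Finset E) (a b : Bool) : Finset E :=
  F₀ ∪ (if a then P else ∅) ∪ (if b then Q else ∅)

noncomputable def gadgetEdges (F₀ : Finset E) (a b : Bool) : Finset (E ⊕ Fin 4) :=
  F₀.image Sum.inl ∪ (if a then {Sum.inr 0, Sum.inr 2} else ∅) ∪
    (if b then {Sum.inr 1, Sum.inr 3} else ∅)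

noncomputable def gadgetWeight (w : E → ℚ) (P Q : Finset E) : E ⊕ Fin 4 → ℚ :=
  Sum.elim w ![0, ∑ f ∈ Q, w f, ∑ f ∈ P, w f, 0]

def IsUnionOfParts {α : Type*} (𝓔 : Finset (Finset α)) (F : Finset α) : Prop :=
  ∀ X ∈ 𝓔, X ⊆ F ∨ Disjoint X F

noncomputable def gadgetPartition (𝓔 : Finset (Finset E)) (P Q : Finset E) :
    Finset (Finset (E ⊕ Fin 4)) :=
  insert {Sum.inr 0, Sum.inr 2} (insert {Sum.inr 1, Sum.inr 3}
    (((𝓔.erase P).erase Q).image (Finset.image Sum.inl)))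

theorem mem_liftEdges {P Q F₀ : Finset E} {a b : Bool} {f : E} :
    f ∈ liftEdges P Q F₀ a b ↔ f ∈ F₀ ∨ (a ∧ f ∈ P) ∨ (b ∧ f ∈ Q) := by
  cases a <;> cases b <;> simp [liftEdges]

@[simp]
theorem inl_mem_gadgetEdges {F₀ : Finset E} {a b : Bool} {f : E} :
    Sum.inl f ∈ gadgetEdges F₀ a b ↔ f ∈ F₀ := by
  cases a <;> cases b <;> simp [gadgetEdges]

theorem inl_mem_gadgetEdges_iff {P Q F₀ : Finset E} (hF₀ : Disjoint F₀ (P ∪ Q)) {a b : Bool}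
    (f : E) : Sum.inl f ∈ gadgetEdges F₀ a b ↔ f ∈ liftEdges P Q F₀ a b ∧ f ∉ P ∪ Q := by
  have : f ∈ F₀ → f ∉ P ∪ Q := fun h => Finset.disjoint_left.mp hF₀ h
  rw [inl_mem_gadgetEdges, mem_liftEdges]
  aesop

theorem liftEdges_subset {P Q F₀ S : Finset E} (hF₀ : F₀ ⊆ S) (hP : P ⊆ S) (hQ : Q ⊆ S)
    (a b : Bool) : liftEdges P Q F₀ a b ⊆ S := fun f hf => by
  rcases mem_liftEdges.mp hf with h | ⟨-, h⟩ | ⟨-, h⟩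
  exacts [hF₀ h, hP h, hQ h]

theorem exists_eq_liftEdges {P Q F : Finset E} (hP : P ⊆ F ∨ Disjoint P F)
    (hQ : Q ⊆ F ∨ Disjoint Q F) :
    ∃ F₀ a b, Disjoint F₀ (P ∪ Q) ∧ F = liftEdges P Q F₀ a b := by
  refine ⟨F \ (P ∪ Q), decide (P ⊆ F), decide (Q ⊆ F), Finset.sdiff_disjoint, ?_⟩
  ext f
  simp only [mem_liftEdges, Finset.mem_sdiff, Finset.mem_union, decide_eq_true_eq]
  constructor
  · intro hf
    by_cases hfP : f ∈ P
    · exact Or.inr (Or.inl ⟨hP.resolve_right fun h => Finset.disjoint_left.mp h hfP hf, hfP⟩)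
    by_cases hfQ : f ∈ Q
    · exact Or.inr (Or.inr ⟨hQ.resolve_right fun h => Finset.disjoint_left.mp h hfQ hf, hfQ⟩)
    exact Or.inl ⟨hf, by tauto⟩
  · rintro (⟨hf, -⟩ | ⟨hPF, hf⟩ | ⟨hQF, hf⟩)
    exacts [hf, hPF hf, hQF hf]

theorem sum_gadgetWeight_gadgetEdges (w : E → ℚ) {P Q F₀ : Finset E}
    (hF₀ : Disjoint F₀ (P ∪ Q)) (hPQ : Disjoint P Q) (a b : Bool) :
    ∑ e ∈ gadgetEdges F₀ a b, gadgetWeight w P Q e = ∑ f ∈ liftEdges P Q F₀ a b, w f := by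
  rw [Finset.disjoint_union_right] at hF₀
  cases a <;> cases b <;>
    simp [gadgetEdges, liftEdges, gadgetWeight, Finset.sum_union, hF₀, hPQ, Finset.sum_image] <;>
    ring

theorem inter_liftEdges_of_disjoint {P Q F₀ X : Finset E} (hX : Disjoint X (P ∪ Q))
    (a b : Bool) : X ∩ liftEdges P Q F₀ a b = X ∩ F₀ := by
  ext f
  have : f ∈ X → f ∉ P ∪ Q := fun h => Finset.disjoint_left.mp hX h
  simp only [Finset.mem_inter, mem_liftEdges, Finset.mem_union] at this ⊢
  tauto

theorem isUnionOfParts_liftEdges_iff {𝓔 : Finset (Finset E)}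
    (hdisj : ∀ X ∈ 𝓔, ∀ Y ∈ 𝓔, X ≠ Y → Disjoint X Y) {P Q : Finset E} (hP : P ∈ 𝓔)
    (hQ : Q ∈ 𝓔) (hPQ : P ≠ Q) {F₀ : Finset E} (hF₀ : Disjoint F₀ (P ∪ Q)) {a b : Bool} :
    IsUnionOfParts 𝓔 (liftEdges P Q F₀ a b) ↔ IsUnionOfParts ((𝓔.erase P).erase Q) F₀ := by
  have hPQ' := Finset.disjoint_left.mp (hdisj P hP Q hQ hPQ)
  have hF₀' := fun {f} (hf : f ∈ F₀) => Finset.disjoint_left.mp hF₀ hf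
  have hunion : ∀ X S : Finset E, (X ⊆ S ∨ Disjoint X S) ↔ (X ∩ S = X ∨ X ∩ S = ∅) :=
    fun X S => by rw [Finset.inter_eq_left, Finset.disjoint_iff_inter_eq_empty]
  constructor
  · intro h X hX
    obtain ⟨hXQ, hXP, hX'⟩ := by simpa only [Finset.mem_erase] using hX
    have hXR := Finset.disjoint_union_right.mpr ⟨hdisj X hX' P hP hXP, hdisj X hX' Q hQ hXQ⟩
    rw [hunion, ← inter_liftEdges_of_disjoint hXR a b, ← hunion]
    exact h X hX'
  · intro h X hX
    by_cases hXP : X = P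
    · subst hXP
      cases a
      · refine Or.inr (Finset.disjoint_left.mpr fun f hf hfF => ?_)
        rcases mem_liftEdges.mp hfF with h | ⟨h, -⟩ | ⟨-, h⟩
        exacts [hF₀' h (Finset.mem_union_left _ hf), absurd h Bool.false_ne_true, hPQ' hf h]
      · exact Or.inl fun f hf => mem_liftEdges.mpr (Or.inr (Or.inl ⟨rfl, hf⟩))
    by_cases hXQ : X = Q
    · subst hXQ
      cases b
      · refine Or.inr (Finset.disjoint_left.mpr fun f hf hfF => ?_)
        rcases mem_liftEdges.mp hfF with h | ⟨-, h⟩ | ⟨h, -⟩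
        exacts [hF₀' h (Finset.mem_union_right _ hf), hPQ' h hf, absurd h Bool.false_ne_true]
      · exact Or.inl fun f hf => mem_liftEdges.mpr (Or.inr (Or.inr ⟨rfl, hf⟩))
    have hX' : X ∈ (𝓔.erase P).erase Q := Finset.mem_erase.mpr ⟨hXQ, Finset.mem_erase.mpr ⟨hXP, hX⟩⟩
    have hXR := Finset.disjoint_union_right.mpr ⟨hdisj X hX P hP hXP, hdisj X hX Q hQ hXQ⟩
    rw [hunion, inter_liftEdges_of_disjoint hXR a b, ← hunion]
    exact h X hX'

theorem isUnionOfParts_gadgetPartition_iff {𝓔 : Finset (Finset E)} {P Q F₀ : Finset E}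
    {a b : Bool} :
    IsUnionOfParts (gadgetPartition 𝓔 P Q) (gadgetEdges F₀ a b) ↔
      IsUnionOfParts ((𝓔.erase P).erase Q) F₀ := by
  have hinl : ∀ X : Finset E, (X.image Sum.inl ⊆ gadgetEdges F₀ a b ↔ X ⊆ F₀) ∧
      (Disjoint (X.image Sum.inl) (gadgetEdges F₀ a b) ↔ Disjoint X F₀) := fun X => by
    simp [Finset.subset_iff, Finset.disjoint_left]
  simp only [IsUnionOfParts, gadgetPartition, Finset.forall_mem_insert, Finset.forall_mem_image,
    hinl]
  rw [and_iff_right, and_iff_right] <;>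
    cases a <;> cases b <;> simp [gadgetEdges, Finset.subset_iff, Finset.disjoint_left]

/-- The darts at `v` of the new edges `e₁, …, e₄`, which are `Sum.inr 0, …, Sum.inr 3`. -/
def gadgetDarts : List ((E ⊕ Fin 4) × Bool) :=
  [(Sum.inr 0, true), (Sum.inr 1, false), (Sum.inr 2, true), (Sum.inr 3, false)]

/-- `G'` arises from `G` by deleting the edges of `R` and putting at `v`, where the arc of their
darts was, four pendant edges alternately directed into and out of `v`. -/
structure IsGadgetReplacement (G : EmbDigraph V E) (G' : EmbDigraph (V ⊕ Fin 4) (E ⊕ Fin 4))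
    (v : V) (R : Finset E) : Prop where
  edges_eq : G'.edges = (G.edges \ R).image Sum.inl ∪
    ({Sum.inr 0, Sum.inr 1, Sum.inr 2, Sum.inr 3} : Finset (E ⊕ Fin 4))
  tail_inl : ∀ f : E, G'.tail (Sum.inl f) = Sum.inl (G.tail f)
  head_inl : ∀ f : E, G'.head (Sum.inl f) = Sum.inl (G.head f)
  tail_inr : ∀ k : Fin 4, G'.tail (Sum.inr k) = if k = 0 ∨ k = 2 then Sum.inr k else Sum.inl v
  head_inr : ∀ k : Fin 4, G'.head (Sum.inr k) = if k = 0 ∨ k = 2 then Sum.inl v else Sum.inr k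
  rot_inl : ∀ u : V, u ≠ v →
    (((G.rot u).filter fun d => decide (d.1 ∉ R)).map
      fun d => ((Sum.inl d.1 : E ⊕ Fin 4), d.2)) ~r G'.rot (Sum.inl u)
  rot_v : ∃ A B : List (E × Bool), G.rot v ~r B ++ A ∧ (∀ d ∈ B, d.1 ∈ R) ∧
    (∀ d ∈ A, d.1 ∉ R) ∧
    G'.rot (Sum.inl v) ~r gadgetDarts ++ A.map fun d => ((Sum.inl d.1 : E ⊕ Fin 4), d.2)

namespace IsGadgetReplacement

variable {G : EmbDigraph V E} {G' : EmbDigraph (V ⊕ Fin 4) (E ⊕ Fin 4)} {v : V} {R : Finset E}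
  {𝓔 : Finset (Finset E)} {P Q : Finset E}

theorem vertexBimodalIn_inr (hG' : IsGadgetReplacement G G' v R) (F' : Finset (E ⊕ Fin 4))
    (k : Fin 4) : G'.VertexBimodalIn F' (Sum.inr k) := by
  refine vertexBimodalIn_of_length_le_one ?_ F'
  have hsub : G'.rot (Sum.inr k) ⊆ [(Sum.inr k, !(k = 0 ∨ k = 2))] := by
    rintro ⟨_ | j, b⟩ hd
    · obtain ⟨-, ⟨-, h⟩ | ⟨-, h⟩⟩ := (G'.mem_rot _ _).mp hd
      · simp [hG'.head_inl] at h
      · simp [hG'.tail_inl] at h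
    · obtain ⟨-, ⟨rfl, h⟩ | ⟨rfl, h⟩⟩ := (G'.mem_rot _ _).mp hd
      · rw [hG'.head_inr] at h
        split_ifs at h with hj
        simp only [Sum.inr.injEq] at h
        subst h
        simp [decide_eq_false hj]
      · rw [hG'.tail_inr] at h
        split_ifs at h with hj
        simp only [Sum.inr.injEq] at h
        subst h
        simp [decide_eq_true hj]
  simpa using ((G'.rot_nodup _).subperm hsub).length_le

theorem vertexBimodalIn_inl_iff (hG' : IsGadgetReplacement G G' v R)
    (hpend : ∀ u, u ≠ v → ∀ d ∈ G.rot u, d.1 ∈ R → (G.rot u).length ≤ 1)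
    {F : Finset E} {F' : Finset (E ⊕ Fin 4)} (hFF' : ∀ f, Sum.inl f ∈ F' ↔ f ∈ F ∧ f ∉ R)
    {u : V} (huv : u ≠ v) : G.VertexBimodalIn F u ↔ G'.VertexBimodalIn F' (Sum.inl u) := by
  by_cases hR : ∃ d ∈ G.rot u, d.1 ∈ R
  · obtain ⟨d, hd, hdR⟩ := hR
    have hlen := hpend u huv d hd hdR
    refine iff_of_true (vertexBimodalIn_of_length_le_one hlen F)
      (vertexBimodalIn_of_length_le_one ?_ F')
    rw [← (hG'.rot_inl u huv).perm.length_eq, List.length_map]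
    exact (List.length_filter_le _ _).trans hlen
  · push Not at hR
    rw [vertexBimodalIn_iff (List.IsRotated.refl _), vertexBimodalIn_iff (hG'.rot_inl u huv).symm,
      dartPattern_map _ fun d hd => ?_, List.filter_eq_self.mpr fun d hd => by simpa using hR d hd]
    rw [hFF', and_iff_left (by simpa using (List.mem_filter.mp hd).2)]

/-- Replacing the arc of darts of `R` at `v` by the gadget preserves bimodality at `v` whenever
the two words they contribute are interchangeable in every cyclic context. -/
theorem exists_vertexBimodalIn_iff (hG' : IsGadgetReplacement G G' v R) :
    ∃ B : List (E × Bool), (∀ d, d ∈ B ↔ d ∈ G.rot v ∧ d.1 ∈ R) ∧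
      ∀ (F : Finset E) (F' : Finset (E ⊕ Fin 4)), (∀ f, Sum.inl f ∈ F' ↔ f ∈ F ∧ f ∉ R) →
        (∀ L, IsCyclicTwoBlock (dartPattern F B ++ L) ↔
          IsCyclicTwoBlock (dartPattern F' gadgetDarts ++ L)) →
        (G.VertexBimodalIn F v ↔ G'.VertexBimodalIn F' (Sum.inl v)) := by
  obtain ⟨A, B, hBA, hB, hA, hG'v⟩ := hG'.rot_v
  refine ⟨B, fun d => ⟨fun hd => ⟨hBA.mem_iff.mpr (List.mem_append_left _ hd), hB d hd⟩, ?_⟩,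
    fun F F' hFF' hL => ?_⟩
  · rintro ⟨hd, hdR⟩
    rcases List.mem_append.mp (hBA.mem_iff.mp hd) with hdB | hdA
    · exact hdB
    · exact absurd hdR (hA d hdA)
  rw [vertexBimodalIn_iff hBA, vertexBimodalIn_iff hG'v, dartPattern_append, dartPattern_append,
    dartPattern_map _ fun d hd => by rw [hFF', and_iff_left (hA d hd)]]
  exact hL _

theorem not_vertexBimodalIn_inl (hG' : IsGadgetReplacement G G' v R)
    {F' : Finset (E ⊕ Fin 4)} (hF' : dartPattern F' gadgetDarts = [true, false, true, false]) :
    ¬ G'.VertexBimodalIn F' (Sum.inl v) := by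
  obtain ⟨A, -, -, -, -, hG'v⟩ := hG'.rot_v
  rw [vertexBimodalIn_iff hG'v, dartPattern_append, hF']
  exact not_isCyclicTwoBlock_alternating _

theorem bimodalIn_iff (hG' : IsGadgetReplacement G G' v R)
    (hpend : ∀ u, u ≠ v → ∀ d ∈ G.rot u, d.1 ∈ R → (G.rot u).length ≤ 1)
    {F : Finset E} {F' : Finset (E ⊕ Fin 4)} (hFF' : ∀ f, Sum.inl f ∈ F' ↔ f ∈ F ∧ f ∉ R)
    (hv : G.VertexBimodalIn F v ↔ G'.VertexBimodalIn F' (Sum.inl v)) :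
    G.BimodalIn F ↔ G'.BimodalIn F' := by
  have hu : ∀ u, G.VertexBimodalIn F u ↔ G'.VertexBimodalIn F' (Sum.inl u) := fun u => by
    rcases eq_or_ne u v with rfl | huv
    · exact hv
    · exact hG'.vertexBimodalIn_inl_iff hpend hFF' huv
  refine ⟨fun h u' => ?_, fun h u => (hu u).mpr (h _)⟩
  rcases u' with u | k
  · exact (hu u).mp (h u)
  · exact hG'.vertexBimodalIn_inr F' k

theorem gadgetEdges_subset (hG' : IsGadgetReplacement G G' v R) {F₀ : Finset E}
    (hF₀ : F₀ ⊆ G.edges \ R) (a b : Bool) : gadgetEdges F₀ a b ⊆ G'.edges := by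
  rw [hG'.edges_eq]
  refine Finset.union_subset (Finset.union_subset
    ((Finset.image_subset_image hF₀).trans Finset.subset_union_left) ?_) ?_ <;>
    split_ifs <;> simp [Finset.insert_subset_iff]

theorem exists_eq_gadgetEdges (hG' : IsGadgetReplacement G G' v R) {F' : Finset (E ⊕ Fin 4)}
    (hF' : F' ⊆ G'.edges)
    (h02 : {Sum.inr 0, Sum.inr 2} ⊆ F' ∨ Disjoint {Sum.inr 0, Sum.inr 2} F')
    (h13 : {Sum.inr 1, Sum.inr 3} ⊆ F' ∨ Disjoint {Sum.inr 1, Sum.inr 3} F') :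
    ∃ F₀ a b, F₀ ⊆ G.edges \ R ∧ F' = gadgetEdges F₀ a b := by
  refine ⟨F'.preimage Sum.inl Sum.inl_injective.injOn, decide (Sum.inr 0 ∈ F'),
    decide (Sum.inr 1 ∈ F'), fun f hf => ?_, ?_⟩
  · simpa [hG'.edges_eq] using hF' (Finset.mem_preimage.mp hf)
  · simp only [Finset.insert_subset_iff, Finset.singleton_subset_iff,
      Finset.disjoint_insert_left, Finset.disjoint_singleton_left] at h02 h13
    ext (f | k)
    · simp
    · fin_cases k <;> rcases h02 with ⟨h0, h2⟩ | ⟨h0, h2⟩ <;>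
        rcases h13 with ⟨h1, h3⟩ | ⟨h1, h3⟩ <;> simp [gadgetEdges, *]

theorem not_bimodalIn_gadgetEdges (hG' : IsGadgetReplacement G G' v R) (F₀ : Finset E) :
    ¬ G'.BimodalIn (gadgetEdges F₀ true true) :=
  fun h => hG'.not_vertexBimodalIn_inl (by simp [dartPattern, gadgetDarts, gadgetEdges]) (h _)

theorem bimodalIn_liftEdges_iff (hG' : IsGadgetReplacement G G' v (P ∪ Q))
    (hpend : ∀ u, u ≠ v → ∀ d ∈ G.rot u, d.1 ∈ P ∪ Q → (G.rot u).length ≤ 1)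
    (hPin : ∀ f ∈ P, G.head f = v) (hQout : ∀ f ∈ Q, G.tail f = v)
    (hP : ∃ f ∈ P, f ∈ G.edges) (hQ : ∃ f ∈ Q, f ∈ G.edges)
    {F₀ : Finset E} (hF₀ : Disjoint F₀ (P ∪ Q)) {a b : Bool} (hab : ¬ (a ∧ b)) :
    G.BimodalIn (liftEdges P Q F₀ a b) ↔ G'.BimodalIn (gadgetEdges F₀ a b) := by
  have hFF' := inl_mem_gadgetEdges_iff hF₀ (a := a) (b := b)
  refine hG'.bimodalIn_iff hpend hFF' ?_
  obtain ⟨B, hB, hv⟩ := hG'.exists_vertexBimodalIn_iff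
  refine hv _ _ hFF' fun L => ?_
  have hF₀B : ∀ d ∈ B, d.1 ∉ F₀ := fun d hd h =>
    Finset.disjoint_left.mp hF₀ h ((hB d).mp hd).2
  cases a <;> cases b
  · rw [dartPattern_eq_nil fun d hd => by simpa [liftEdges] using hF₀B d hd]
    simp [dartPattern, gadgetDarts, gadgetEdges]
  · obtain ⟨f, hfQ, hfE⟩ := hQ
    obtain ⟨c, hc, hBc⟩ := exists_dartPattern_eq_replicate (l := B) (x := false)
      (F := liftEdges P Q F₀ false true)
      (fun d hd hdF => dir_eq_false_of_tail_eq ((hB d).mp hd).1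
        (hQout _ (by simpa [liftEdges, hF₀B d hd] using hdF)))
      ⟨(f, false), (hB _).mpr ⟨(G.mem_rot v _).mpr ⟨hfE, Or.inr ⟨rfl, hQout f hfQ⟩⟩,
        Finset.mem_union_right _ hfQ⟩, by simp [liftEdges, hfQ]⟩
    rw [hBc, show dartPattern (gadgetEdges F₀ false true) gadgetDarts = List.replicate 2 false by
      simp [dartPattern, gadgetDarts, gadgetEdges]]
    exact isCyclicTwoBlock_replicate_append_iff false hc two_pos L
  · obtain ⟨f, hfP, hfE⟩ := hP
    obtain ⟨c, hc, hBc⟩ := exists_dartPattern_eq_replicate (l := B) (x := true)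
      (F := liftEdges P Q F₀ true false)
      (fun d hd hdF => dir_eq_true_of_head_eq ((hB d).mp hd).1
        (hPin _ (by simpa [liftEdges, hF₀B d hd] using hdF)))
      ⟨(f, true), (hB _).mpr ⟨(G.mem_rot v _).mpr ⟨hfE, Or.inl ⟨rfl, hPin f hfP⟩⟩,
        Finset.mem_union_left _ hfP⟩, by simp [liftEdges, hfP]⟩
    rw [hBc, show dartPattern (gadgetEdges F₀ true false) gadgetDarts = List.replicate 2 true by
      simp [dartPattern, gadgetDarts, gadgetEdges]]
    exact isCyclicTwoBlock_replicate_append_iff true hc two_pos L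
  · exact absurd ⟨rfl, rfl⟩ hab

theorem exists_cutFeasible_gadget (hG' : IsGadgetReplacement G G' v (P ∪ Q))
    (hpend : ∀ u, u ≠ v → ∀ d ∈ G.rot u, d.1 ∈ P ∪ Q → (G.rot u).length ≤ 1)
    (hpart : G.IsEdgePartition 𝓔) (hP : P ∈ 𝓔) (hQ : Q ∈ 𝓔) (hPQ : P ≠ Q)
    (hPin : ∀ f ∈ P, G.head f = v) (hQout : ∀ f ∈ Q, G.tail f = v) (w : E → ℚ)
    {F : Finset E} (hF : G.CutFeasible 𝓔 F) (hFPQ : ¬ (P ⊆ F ∧ Q ⊆ F)) :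
    ∃ F', G'.CutFeasible (gadgetPartition 𝓔 P Q) F' ∧
      ∑ e ∈ F', gadgetWeight w P Q e = ∑ e ∈ F, w e := by
  obtain ⟨hFE, hFparts, hFbim⟩ := hF
  obtain ⟨F₀, a, b, hF₀, rfl⟩ := exists_eq_liftEdges (hFparts P hP) (hFparts Q hQ)
  have hab : ¬ (a ∧ b) := by
    rintro ⟨rfl, rfl⟩
    exact hFPQ ⟨fun f hf => mem_liftEdges.mpr (by simp [hf]),
      fun f hf => mem_liftEdges.mpr (by simp [hf])⟩
  have hP' := hpart.1 P hP
  have hQ' := hpart.1 Q hQ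
  refine ⟨gadgetEdges F₀ a b, ⟨hG'.gadgetEdges_subset ?_ a b, ?_, ?_⟩,
    sum_gadgetWeight_gadgetEdges w hF₀ (hpart.2.1 P hP Q hQ hPQ) a b⟩
  · exact fun f hf => Finset.mem_sdiff.mpr
      ⟨hFE (mem_liftEdges.mpr (Or.inl hf)), Finset.disjoint_left.mp hF₀ hf⟩
  · exact isUnionOfParts_gadgetPartition_iff.mpr
      ((isUnionOfParts_liftEdges_iff hpart.2.1 hP hQ hPQ hF₀).mp hFparts)
  · exact (hG'.bimodalIn_liftEdges_iff hpend hPin hQout (hP'.1.imp fun f hf => ⟨hf, hP'.2 hf⟩)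
      (hQ'.1.imp fun f hf => ⟨hf, hQ'.2 hf⟩) hF₀ hab).mp hFbim

theorem exists_cutFeasible_of_cutFeasible_gadget (hG' : IsGadgetReplacement G G' v (P ∪ Q))
    (hpend : ∀ u, u ≠ v → ∀ d ∈ G.rot u, d.1 ∈ P ∪ Q → (G.rot u).length ≤ 1)
    (hpart : G.IsEdgePartition 𝓔) (hP : P ∈ 𝓔) (hQ : Q ∈ 𝓔) (hPQ : P ≠ Q)
    (hPin : ∀ f ∈ P, G.head f = v) (hQout : ∀ f ∈ Q, G.tail f = v) (w : E → ℚ)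
    {F' : Finset (E ⊕ Fin 4)} (hF' : G'.CutFeasible (gadgetPartition 𝓔 P Q) F') :
    ∃ F, G.CutFeasible 𝓔 F ∧ ∑ e ∈ F, w e = ∑ e ∈ F', gadgetWeight w P Q e := by
  obtain ⟨hF'E, hF'parts, hF'bim⟩ := hF'
  obtain ⟨F₀, a, b, hF₀, rfl⟩ := hG'.exists_eq_gadgetEdges hF'E
    (hF'parts _ (Finset.mem_insert_self _ _))
    (hF'parts _ (Finset.mem_insert_of_mem (Finset.mem_insert_self _ _)))
  have hab : ¬ (a ∧ b) := by
    rintro ⟨rfl, rfl⟩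
    exact hG'.not_bimodalIn_gadgetEdges F₀ hF'bim
  have hF₀' : Disjoint F₀ (P ∪ Q) :=
    Finset.disjoint_left.mpr fun _ hf => (Finset.mem_sdiff.mp (hF₀ hf)).2
  have hP' := hpart.1 P hP
  have hQ' := hpart.1 Q hQ
  refine ⟨liftEdges P Q F₀ a b,
    ⟨liftEdges_subset (hF₀.trans Finset.sdiff_subset) hP'.2 hQ'.2 a b, ?_, ?_⟩,
    (sum_gadgetWeight_gadgetEdges w hF₀' (hpart.2.1 P hP Q hQ hPQ) a b).symm⟩
  · exact (isUnionOfParts_liftEdges_iff hpart.2.1 hP hQ hPQ hF₀').mpr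
      (isUnionOfParts_gadgetPartition_iff.mp hF'parts)
  · exact (hG'.bimodalIn_liftEdges_iff hpend hPin hQout (hP'.1.imp fun f hf => ⟨hf, hP'.2 hf⟩)
      (hQ'.1.imp fun f hf => ⟨hf, hQ'.2 hf⟩) hF₀' hab).mpr hF'bim

end IsGadgetReplacement

end EmbDigraph

theorem cut_reduction_rule_gadget_general {V E : Type*}
    (G : EmbDigraph V E) (G' : EmbDigraph (V ⊕ Fin 4) (E ⊕ Fin 4))
    (w : E → ℚ)
    (𝓔 : Finset (Finset E)) (hpart : G.IsEdgePartition 𝓔)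
    (hdeg : ∀ u : V, G.Good u → (G.rot u).length = 1)
    (v : V) (S : Set E) (hS : G.GoodEdgeSection v S)
    (Ein Eout : Finset E) (hin : Ein ∈ 𝓔) (hout : Eout ∈ 𝓔) (hneq : Ein ≠ Eout)
    (hinS : ↑Ein ⊆ S) (houtS : ↑Eout ⊆ S)
    (hdirIn : ∀ f ∈ Ein, G.head f = v) (hdirOut : ∀ f ∈ Eout, G.tail f = v)
    (hopt : ∃ F : Finset E, G.CutFeasible 𝓔 F ∧ G.IsCutMBW w 𝓔 (∑ e ∈ F, w e) ∧
      ¬ (Ein ⊆ F ∧ Eout ⊆ F))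
    (hE' : G'.edges = (G.edges \ (Ein ∪ Eout)).image Sum.inl ∪
      ({Sum.inr 0, Sum.inr 1, Sum.inr 2, Sum.inr 3} : Finset (E ⊕ Fin 4)))
    (ht1 : ∀ f : E, G'.tail (Sum.inl f) = Sum.inl (G.tail f))
    (hh1 : ∀ f : E, G'.head (Sum.inl f) = Sum.inl (G.head f))
    (ht2 : ∀ k : Fin 4,
      G'.tail (Sum.inr k) = if k = 0 ∨ k = 2 then Sum.inr k else Sum.inl v)
    (hh2 : ∀ k : Fin 4,
      G'.head (Sum.inr k) = if k = 0 ∨ k = 2 then Sum.inl v else Sum.inr k)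
    (hrotu : ∀ u : V, u ≠ v → ∃ n : ℕ, G'.rot (Sum.inl u) =
      ((((G.rot u).filter fun d => decide (d.1 ∉ Ein ∪ Eout)).map
        fun d => ((Sum.inl d.1 : E ⊕ Fin 4), d.2)).rotate n))
    (hrotv : ∃ (n n' : ℕ) (A B : List (E × Bool)),
      (G.rot v).rotate n = B ++ A ∧
      (∀ d ∈ B, d.1 ∈ Ein ∪ Eout) ∧ (∀ d ∈ A, d.1 ∉ Ein ∪ Eout) ∧
      (G'.rot (Sum.inl v)).rotate n' =
        [((Sum.inr 0 : E ⊕ Fin 4), true), (Sum.inr 1, false),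
          (Sum.inr 2, true), (Sum.inr 3, false)] ++
          A.map fun d => ((Sum.inl d.1 : E ⊕ Fin 4), d.2))
    (w' : E ⊕ Fin 4 → ℚ)
    (hw'l : ∀ f : E, w' (Sum.inl f) = w f)
    (hw'1 : w' (Sum.inr 0) = 0) (hw'4 : w' (Sum.inr 3) = 0)
    (hw'2 : w' (Sum.inr 1) = ∑ f ∈ Eout, w f) (hw'3 : w' (Sum.inr 2) = ∑ f ∈ Ein, w f)
    (𝓔' : Finset (Finset (E ⊕ Fin 4)))
    (h𝓔' : 𝓔' = insert {Sum.inr 0, Sum.inr 2} (insert {Sum.inr 1, Sum.inr 3}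
      (((𝓔.erase Ein).erase Eout).image (Finset.image Sum.inl)))) :
    ∀ m m' : ℚ, G.IsCutMBW w 𝓔 m → G'.IsCutMBW w' 𝓔' m' → m' = m := by
  intro m m' hm hm'
  have hG' : IsGadgetReplacement G G' v (Ein ∪ Eout) :=
    { edges_eq := hE', tail_inl := ht1, head_inl := hh1, tail_inr := ht2, head_inr := hh2
      rot_inl := fun u huv => (hrotu u huv).elim fun n h => ⟨n, h.symm⟩
      rot_v := by
        obtain ⟨n, n', A, B, hBA, hB, hA, h⟩ := hrotv
        exact ⟨A, B, ⟨n, hBA⟩, hB, hA, ⟨n', h⟩⟩ }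
  have hpend : ∀ u, u ≠ v → ∀ d ∈ G.rot u, d.1 ∈ Ein ∪ Eout → (G.rot u).length ≤ 1 :=
    fun u huv d hd hdR => hS.1.length_rot_le_one hdeg huv hd
      ((Finset.mem_union.mp hdR).elim (fun h => hinS h) fun h => houtS h)
  obtain rfl : w' = gadgetWeight w Ein Eout := by
    funext e
    rcases e with f | k
    · exact hw'l f
    · fin_cases k <;> simp [gadgetWeight, hw'1, hw'2, hw'3, hw'4]
  subst h𝓔'
  refine le_antisymm ?_ ?_
  · obtain ⟨F', hF', rfl⟩ := hm'.1
    obtain ⟨F, hF, hsum⟩ := hG'.exists_cutFeasible_of_cutFeasible_gadget hpend hpart hin hout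
      hneq hdirIn hdirOut w hF'
    exact hsum ▸ hm.2 ⟨F, hF, rfl⟩
  · obtain ⟨F, hF, hFopt, hFPQ⟩ := hopt
    obtain ⟨F', hF', hsum⟩ := hG'.exists_cutFeasible_gadget hpend hpart hin hout hneq hdirIn
      hdirOut w hF hFPQ
    rw [← hFopt.unique hm, ← hsum]
    exact hm'.2 ⟨F', hF', rfl⟩

/-- Soundness of Reduction Rule 5 for Cut-MWBS: two parts `ℰ_in` (all edges into
`v`) and `ℰ_out` (all edges out of `v`) of a good edge-section `S` of a bad vertex
`v`, whose union of darts is a consecutive arc within `S` while at least one of the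
two parts is not itself consecutive, are replaced (in place, in the cyclic ordering
at `v`) by four fresh pendant edges `e₁, e₂, e₃, e₄` (modelled as `Sum.inr 0, …,
Sum.inr 3`), with `e₁, e₃` directed into `v`, `e₂, e₄` out of `v`, weights
`w'(e₁) = w'(e₄) = 0`, `w'(e₂) = w(ℰ_out)`, `w'(e₃) = w(ℰ_in)`, and new parts
`{e₁, e₃}` and `{e₂, e₄}`.  Assuming some maximum-weight feasible set contains at
most one of the two parts, `Cut-MBW(G', w', ℰ') = Cut-MBW(G, w, ℰ)`. -/
theorem cut_reduction_rule_gadget {V E : Type*}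
    (G : EmbDigraph V E) (G' : EmbDigraph (V ⊕ Fin 4) (E ⊕ Fin 4))
    (w : E → ℚ) (hw : ∀ e, 0 ≤ w e)
    (𝓔 : Finset (Finset E)) (hpart : G.IsEdgePartition 𝓔)
    (hind : ∀ e ∈ G.edges, ¬ (G.Good (G.tail e) ∧ G.Good (G.head e)))
    (hdeg : ∀ u : V, G.Good u → (G.rot u).length = 1)
    (v : V) (hv : ¬ G.Good v) (S : Set E) (hS : G.GoodEdgeSection v S)
    (Ein Eout : Finset E) (hin : Ein ∈ 𝓔) (hout : Eout ∈ 𝓔) (hneq : Ein ≠ Eout)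
    (hinS : ↑Ein ⊆ S) (houtS : ↑Eout ⊆ S)
    (hdirIn : ∀ f ∈ Ein, G.head f = v) (hdirOut : ∀ f ∈ Eout, G.tail f = v)
    (harc : G.ArcWithin v S ↑(Ein ∪ Eout))
    (hnotarc : ¬ G.ArcWithin v S ↑Ein ∨ ¬ G.ArcWithin v S ↑Eout)
    (hopt : ∃ F : Finset E, G.CutFeasible 𝓔 F ∧ G.IsCutMBW w 𝓔 (∑ e ∈ F, w e) ∧
      ¬ (Ein ⊆ F ∧ Eout ⊆ F))
    (hE' : G'.edges = (G.edges \ (Ein ∪ Eout)).image Sum.inl ∪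
      ({Sum.inr 0, Sum.inr 1, Sum.inr 2, Sum.inr 3} : Finset (E ⊕ Fin 4)))
    (ht1 : ∀ f : E, G'.tail (Sum.inl f) = Sum.inl (G.tail f))
    (hh1 : ∀ f : E, G'.head (Sum.inl f) = Sum.inl (G.head f))
    (ht2 : ∀ k : Fin 4,
      G'.tail (Sum.inr k) = if k = 0 ∨ k = 2 then Sum.inr k else Sum.inl v)
    (hh2 : ∀ k : Fin 4,
      G'.head (Sum.inr k) = if k = 0 ∨ k = 2 then Sum.inl v else Sum.inr k)
    (hrotu : ∀ u : V, u ≠ v → ∃ n : ℕ, G'.rot (Sum.inl u) =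
      ((((G.rot u).filter fun d => decide (d.1 ∉ Ein ∪ Eout)).map
        fun d => ((Sum.inl d.1 : E ⊕ Fin 4), d.2)).rotate n))
    (hrotv : ∃ (n n' : ℕ) (A B : List (E × Bool)),
      (G.rot v).rotate n = B ++ A ∧
      (∀ d ∈ B, d.1 ∈ Ein ∪ Eout) ∧ (∀ d ∈ A, d.1 ∉ Ein ∪ Eout) ∧
      (G'.rot (Sum.inl v)).rotate n' =
        [((Sum.inr 0 : E ⊕ Fin 4), true), (Sum.inr 1, false),
          (Sum.inr 2, true), (Sum.inr 3, false)] ++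
          A.map fun d => ((Sum.inl d.1 : E ⊕ Fin 4), d.2))
    (w' : E ⊕ Fin 4 → ℚ)
    (hw'l : ∀ f : E, w' (Sum.inl f) = w f)
    (hw'1 : w' (Sum.inr 0) = 0) (hw'4 : w' (Sum.inr 3) = 0)
    (hw'2 : w' (Sum.inr 1) = ∑ f ∈ Eout, w f) (hw'3 : w' (Sum.inr 2) = ∑ f ∈ Ein, w f)
    (𝓔' : Finset (Finset (E ⊕ Fin 4)))
    (h𝓔' : 𝓔' = insert {Sum.inr 0, Sum.inr 2} (insert {Sum.inr 1, Sum.inr 3}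
      (((𝓔.erase Ein).erase Eout).image (Finset.image Sum.inl)))) :
    ∀ m m' : ℚ, G.IsCutMBW w 𝓔 m → G'.IsCutMBW w' 𝓔' m' → m' = m :=
  cut_reduction_rule_gadget_general G G' w 𝓔 hpart hdeg v S hS Ein Eout hin hout hneq hinS houtS
    hdirIn hdirOut hopt hE' ht1 hh1 ht2 hh2 hrotu hrotv w' hw'l hw'1 hw'4 hw'2 hw'3 𝓔' h𝓔'
end
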